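/- arXiv:2109.05737 — 2 statements merged into one kernel-verified Lean document; each statement's English description precedes it below -/
import Mathlib

section
/- For real matrices E, R symmetric positive semidefinite and J skew-symmetric, the pencil λE - (J - R) is singular (det(λE - J + R) = 0 for all λ ∈ ℂ) if and only if ker J ∩ ker E ∩ ker R ≠ {0}. -/
/-!
Only `λ = 1` is needed for the forward direction. A real kernel vector `v` of `E - J + R`
satisfies `vᵀ E v + vᵀ R v = vᵀ J v = 0`, because the quadratic form of a skew-symmetric
matrix vanishes; positive semidefiniteness then forces `E v = R v = 0`, and hence `J v = 0`.
-/

open Matrix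

namespace Matrix

variable {ι : Type*} [Fintype ι]

theorem dotProduct_mulVec_self_eq_zero_of_transpose_eq_neg {α : Type*} [CommRing α]
    [IsAddTorsionFree α] {J : Matrix ι ι α} (hJ : Jᵀ = -J) (x : ι → α) :
    x ⬝ᵥ J *ᵥ x = 0 :=
  self_eq_neg.mp <| calc
    x ⬝ᵥ J *ᵥ x = Jᵀ *ᵥ x ⬝ᵥ x := by
      rw [dotProduct_mulVec, ← vecMul_transpose, transpose_transpose]
    _ = -(x ⬝ᵥ J *ᵥ x) := by rw [hJ, neg_mulVec, neg_dotProduct, dotProduct_comm]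

theorem mulVec_eq_zero_of_sub_add_mulVec_eq_zero {E R J : Matrix ι ι ℝ}
    (hE : E.PosSemidef) (hR : R.PosSemidef) (hJ : Jᵀ = -J) {v : ι → ℝ}
    (hv : (E - J + R) *ᵥ v = 0) : J *ᵥ v = 0 ∧ E *ᵥ v = 0 ∧ R *ᵥ v = 0 := by
  have hEnn : 0 ≤ v ⬝ᵥ E *ᵥ v := hE.dotProduct_mulVec_nonneg v
  have hRnn : 0 ≤ v ⬝ᵥ R *ᵥ v := hR.dotProduct_mulVec_nonneg v
  have hsum : v ⬝ᵥ E *ᵥ v + v ⬝ᵥ R *ᵥ v = 0 := by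
    have := congrArg (v ⬝ᵥ ·) hv
    simp only [add_mulVec, sub_mulVec, dotProduct_add, dotProduct_sub, dotProduct_zero,
      dotProduct_mulVec_self_eq_zero_of_transpose_eq_neg hJ, sub_zero] at this
    exact this
  have hEv : E *ᵥ v = 0 :=
    (hE.dotProduct_mulVec_zero_iff v).mp (by simp only [star_trivial]; linarith)
  have hRv : R *ᵥ v = 0 :=
    (hR.dotProduct_mulVec_zero_iff v).mp (by simp only [star_trivial]; linarith)
  refine ⟨?_, hEv, hRv⟩
  simpa [add_mulVec, sub_mulVec, hEv, hRv] using hv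

theorem det_smul_sub_add_eq_zero_of_mulVec_eq_zero {K : Type*} [CommRing K] [IsDomain K]
    [DecidableEq ι] {E J R : Matrix ι ι K} {x : ι → K} (hx : x ≠ 0)
    (hEx : E *ᵥ x = 0) (hJx : J *ᵥ x = 0) (hRx : R *ᵥ x = 0) (lam : K) :
    (lam • E - J + R).det = 0 :=
  exists_mulVec_eq_zero_iff.mp
    ⟨x, hx, by rw [add_mulVec, sub_mulVec, smul_mulVec, hEx, hJx, hRx]; simp⟩

theorem map_mulVec_comp_eq_zero {R S : Type*} [NonAssocSemiring R] [NonAssocSemiring S]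
    (f : R →+* S) {M : Matrix ι ι R} {x : ι → R} (hx : M *ᵥ x = 0) :
    M.map f *ᵥ (f ∘ x) = 0 := by
  ext i
  rw [← RingHom.map_mulVec, hx, Pi.zero_apply, map_zero, Pi.zero_apply]

end Matrix

/-- A dH pencil `λ E - (J - R)` is singular (its determinant vanishes identically)
iff the kernels of `J`, `E` and `R` have a nontrivial common intersection. -/
theorem dH_pencil_singular_iff_common_kernel {n : ℕ}
    (E R J : Matrix (Fin n) (Fin n) ℝ)
    (hE : E.PosSemidef) (hR : R.PosSemidef) (hJ : Jᵀ = -J) :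
    (∀ lam : ℂ,
      (lam • E.map (fun r => (r : ℂ)) - J.map (fun r => (r : ℂ))
        + R.map (fun r => (r : ℂ))).det = 0)
    ↔ ∃ x : Fin n → ℝ, x ≠ 0 ∧ J.mulVec x = 0 ∧ E.mulVec x = 0 ∧ R.mulVec x = 0 := by
  constructor
  · intro h
    have hdet : (E - J + R).det = 0 := by
      have h1 : Complex.ofRealHom (E - J + R).det = 0 := by
        rw [RingHom.map_det, map_add, map_sub, ← one_smul ℂ (Complex.ofRealHom.mapMatrix E)]
        exact h 1
      exact Complex.ofReal_eq_zero.mp h1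
    obtain ⟨v, hv, hMv⟩ := exists_mulVec_eq_zero_iff.mpr hdet
    exact ⟨v, hv, mulVec_eq_zero_of_sub_add_mulVec_eq_zero hE hR hJ hMv⟩
  · rintro ⟨x, hx, hJx, hEx, hRx⟩ lam
    have hx' : Complex.ofRealHom ∘ x ≠ 0 :=
      fun h => hx (funext fun i => Complex.ofReal_eq_zero.mp (congrFun h i))
    exact det_smul_sub_add_eq_zero_of_mulVec_eq_zero hx' (map_mulVec_comp_eq_zero _ hEx)
      (map_mulVec_comp_eq_zero _ hJx) (map_mulVec_comp_eq_zero _ hRx) lam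
end

section
/- Let A, B ∈ ℝ^{n×n} be symmetric. Let E, R ∈ ℝ^{n×n} be symmetric and J ∈ ℝ^{n×n} skew-symmetric. If u is a unit eigenvector of -J² + E² + R² associated with the smallest eigenvalue λ_min, then 2‖Ju‖² + 2‖(I-uu^⊤)Eu‖² + (u^⊤Eu)² + 2‖(I-uu^⊤)Ru‖² + (u^⊤Ru)² ≤ 2λ_min. -/
open Matrix

/-- Evaluated at a unit eigenvector `u` of `M = -J² + E² + R²` associated with its
smallest eigenvalue, the distance functional is at most twice that eigenvalue. -/
theorem dH_distance_upper_bound_at_eigvec {n : ℕ} (hn : 0 < n)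
    (E R J : Matrix (Fin n) (Fin n) ℝ)
    (hE : Eᵀ = E) (hR : Rᵀ = R) (hJ : Jᵀ = -J)
    (hM : (-(J * J) + E * E + R * R).IsHermitian)
    (u : Fin n → ℝ) (hu : u ⬝ᵥ u = 1)
    (heig : (-(J * J) + E * E + R * R).mulVec u = (⨅ i, hM.eigenvalues i) • u) :
    2 * (J.mulVec u ⬝ᵥ J.mulVec u)
        + 2 * ((E.mulVec u - (u ⬝ᵥ E.mulVec u) • u) ⬝ᵥ
               (E.mulVec u - (u ⬝ᵥ E.mulVec u) • u))
        + (u ⬝ᵥ E.mulVec u) ^ 2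
        + 2 * ((R.mulVec u - (u ⬝ᵥ R.mulVec u) • u) ⬝ᵥ
               (R.mulVec u - (u ⬝ᵥ R.mulVec u) • u))
        + (u ⬝ᵥ R.mulVec u) ^ 2
      ≤ 2 * (⨅ i, hM.eigenvalues i) := by
  set lam := ⨅ i, hM.eigenvalues i with hlam
  have key : ∀ (A : Matrix (Fin n) (Fin n) ℝ) (w : Fin n → ℝ),
      u ⬝ᵥ A.mulVec w = (Aᵀ.mulVec u) ⬝ᵥ w := by
    intro A w
    rw [dotProduct_mulVec, mulVec_transpose]
  have hlval : u ⬝ᵥ (-(J * J) + E * E + R * R).mulVec u = lam := by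
    rw [heig, dotProduct_smul, hu, smul_eq_mul, mul_one]
  have hsum : J.mulVec u ⬝ᵥ J.mulVec u + E.mulVec u ⬝ᵥ E.mulVec u
      + R.mulVec u ⬝ᵥ R.mulVec u = lam := by
    have hJ2 : u ⬝ᵥ (J * J).mulVec u = -(J.mulVec u ⬝ᵥ J.mulVec u) := by
      rw [← mulVec_mulVec, key, hJ, neg_mulVec, neg_dotProduct]
    have hE2 : u ⬝ᵥ (E * E).mulVec u = E.mulVec u ⬝ᵥ E.mulVec u := by
      rw [← mulVec_mulVec, key, hE]
    have hR2 : u ⬝ᵥ (R * R).mulVec u = R.mulVec u ⬝ᵥ R.mulVec u := by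
      rw [← mulVec_mulVec, key, hR]
    rw [add_mulVec, add_mulVec, neg_mulVec, dotProduct_add, dotProduct_add,
      dotProduct_neg, hJ2, hE2, hR2] at hlval
    linarith
  have hEexp : (E.mulVec u - (u ⬝ᵥ E.mulVec u) • u) ⬝ᵥ
      (E.mulVec u - (u ⬝ᵥ E.mulVec u) • u)
      = E.mulVec u ⬝ᵥ E.mulVec u - (u ⬝ᵥ E.mulVec u) ^ 2 := by
    rw [sub_dotProduct, dotProduct_sub, dotProduct_sub, smul_dotProduct,
      dotProduct_smul, dotProduct_smul, smul_dotProduct, hu,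
      dotProduct_comm (E.mulVec u) u]
    simp only [smul_eq_mul]; ring
  have hRexp : (R.mulVec u - (u ⬝ᵥ R.mulVec u) • u) ⬝ᵥ
      (R.mulVec u - (u ⬝ᵥ R.mulVec u) • u)
      = R.mulVec u ⬝ᵥ R.mulVec u - (u ⬝ᵥ R.mulVec u) ^ 2 := by
    rw [sub_dotProduct, dotProduct_sub, dotProduct_sub, smul_dotProduct,
      dotProduct_smul, dotProduct_smul, smul_dotProduct, hu,
      dotProduct_comm (R.mulVec u) u]
    simp only [smul_eq_mul]; ring
  rw [hEexp, hRexp]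
  nlinarith [sq_nonneg (u ⬝ᵥ E.mulVec u), sq_nonneg (u ⬝ᵥ R.mulVec u)]
end
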